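/- Let E be a real inner product space and g, d ∈ E with d ≠ 0. If ‖g − d‖ ≤ r for some 0 ≤ r ≤ ‖d‖, then ⟨g, d⟩ ≥ ‖g‖ · (‖d‖² − r²)^{1/2}; that is, the angle between g and d is at most arcsin(r/‖d‖). In particular, if r ≤ ‖d‖/√2 then ⟨g, d⟩ ≥ ‖g‖‖d‖/√2, i.e. the angle between g and d is at most 45°. -/

import Mathlib

open RealInnerProductSpace

/-- Polarization gives `2 ⟪g, d⟫ = ‖g‖² + ‖d‖² - ‖g - d‖² ≥ ‖g‖² + s²`, and `‖g‖² + s² ≥ 2 ‖g‖ s`. -/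
theorem norm_mul_le_real_inner_of_sq_add_norm_sub_sq_le
    {E : Type*} [NormedAddCommGroup E] [InnerProductSpace ℝ E] {g d : E} {s : ℝ}
    (h : s ^ 2 + ‖g - d‖ ^ 2 ≤ ‖d‖ ^ 2) : ‖g‖ * s ≤ ⟪g, d⟫ := by
  linarith [norm_sub_sq_real g d, two_mul_le_add_sq ‖g‖ s]

theorem fw_rnn_angle_bound_general
    {E : Type*} [NormedAddCommGroup E] [InnerProductSpace ℝ E]
    (g d : E) (r : ℝ) (hrd : r ≤ ‖d‖)
    (h : ‖g - d‖ ≤ r) :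
    ⟪g, d⟫ ≥ ‖g‖ * Real.sqrt (‖d‖ ^ 2 - r ^ 2) ∧
      (r ≤ ‖d‖ / Real.sqrt 2 → ⟪g, d⟫ ≥ ‖g‖ * ‖d‖ / Real.sqrt 2) := by
  have hr0 : 0 ≤ r := (norm_nonneg _).trans h
  have hgd : ‖g - d‖ ^ 2 ≤ r ^ 2 := pow_le_pow_left₀ (norm_nonneg _) h 2
  have hrd2 : r ^ 2 ≤ ‖d‖ ^ 2 := pow_le_pow_left₀ hr0 hrd 2
  refine ⟨norm_mul_le_real_inner_of_sq_add_norm_sub_sq_le ?_, fun hr => ?_⟩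
  · rw [Real.sq_sqrt (sub_nonneg.mpr hrd2)]
    linarith
  · have hgd' : ‖g - d‖ ^ 2 ≤ (‖d‖ / Real.sqrt 2) ^ 2 :=
      pow_le_pow_left₀ (norm_nonneg _) (h.trans hr) 2
    rw [mul_div_assoc]
    apply norm_mul_le_real_inner_of_sq_add_norm_sub_sq_le
    rw [div_pow, Real.sq_sqrt zero_le_two] at hgd' ⊢
    linarith

/-- If `g` lies in the ball of radius `r ≤ ‖d‖` centered at `d`, then the angle
between `g` and `d` is at most `arcsin (r / ‖d‖)`; in particular it is at most
45° when `r ≤ ‖d‖ / √2`. -/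
theorem fw_rnn_angle_bound
    {E : Type*} [NormedAddCommGroup E] [InnerProductSpace ℝ E]
    (g d : E) (hd : d ≠ 0) (r : ℝ) (hr0 : 0 ≤ r) (hrd : r ≤ ‖d‖)
    (h : ‖g - d‖ ≤ r) :
    ⟪g, d⟫ ≥ ‖g‖ * Real.sqrt (‖d‖ ^ 2 - r ^ 2) ∧
      (r ≤ ‖d‖ / Real.sqrt 2 → ⟪g, d⟫ ≥ ‖g‖ * ‖d‖ / Real.sqrt 2) :=
  fw_rnn_angle_bound_general g d r hrd h
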